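/- Let A, B, T be finite sets (in a type with decidable equality) such that A ∪ T, B ∪ T, and (A ∪ B) ∪ T are nonempty. Then the Jaccard dissimilarity satisfies 1 − J(A ∪ B, T) ≤ 2·[(1 − J(A, T)) + (1 − J(B, T))], where J(X,Y) = |X ∩ Y| / |X ∪ Y| as real numbers. -/

import Mathlib

/-! Writing the dissimilarity as `#(X ∆ T) / #(X ∪ T)`, the claim follows from
`(A ∪ B) ∆ T ⊆ A ∆ T ∪ B ∆ T` and the fact that the denominator `#((A ∪ B) ∪ T)` dominates both
`#(A ∪ T)` and `#(B ∪ T)`. This already gives the bound with constant `1`. If `A ∪ T` or `B ∪ T`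
is empty, its dissimilarity is `1` (as `0 / 0 = 0`), which dominates any dissimilarity. -/

open Finset
open scoped symmDiff

namespace Finset

variable {α : Type*} [DecidableEq α]

theorem union_symmDiff_subset (A B T : Finset α) : (A ∪ B) ∆ T ⊆ A ∆ T ∪ B ∆ T := by
  intro x
  simp only [mem_symmDiff, mem_union]
  tauto

theorem card_symmDiff_add_card_inter (X T : Finset α) : #(X ∆ T) + #(X ∩ T) = #(X ∪ T) := by
  rw [symmDiff_eq_sup_sdiff_inf]
  exact card_sdiff_add_card_eq_card inter_subset_union

noncomputable def jaccardDist (X T : Finset α) : ℝ := 1 - (#(X ∩ T) : ℝ) / #(X ∪ T)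

theorem jaccardDist_eq_card_symmDiff_div {X T : Finset α} (h : (X ∪ T).Nonempty) :
    jaccardDist X T = (#(X ∆ T) : ℝ) / #(X ∪ T) := by
  have hpos : (0 : ℝ) < #(X ∪ T) := by exact_mod_cast h.card_pos
  have hcard : (#(X ∆ T) : ℝ) + #(X ∩ T) = #(X ∪ T) := by
    exact_mod_cast card_symmDiff_add_card_inter X T
  rw [jaccardDist, eq_div_iff hpos.ne', sub_mul, div_mul_cancel₀ _ hpos.ne']
  linarith

theorem jaccardDist_nonneg (X T : Finset α) : 0 ≤ jaccardDist X T := by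
  rw [jaccardDist, sub_nonneg]
  exact div_le_one_of_le₀ (by exact_mod_cast card_le_card inter_subset_union) (by positivity)

theorem jaccardDist_le_one (X T : Finset α) : jaccardDist X T ≤ 1 := by
  rw [jaccardDist]
  linarith [show (0 : ℝ) ≤ (#(X ∩ T) : ℝ) / #(X ∪ T) by positivity]

theorem jaccardDist_of_union_eq_empty {X T : Finset α} (h : X ∪ T = ∅) : jaccardDist X T = 1 := by
  simp [jaccardDist, h]

theorem jaccardDist_union_le (A B T : Finset α) :
    jaccardDist (A ∪ B) T ≤ jaccardDist A T + jaccardDist B T := by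
  rcases (A ∪ T).eq_empty_or_nonempty with hA | hA
  · rw [jaccardDist_of_union_eq_empty hA]
    linarith [jaccardDist_le_one (A ∪ B) T, jaccardDist_nonneg B T]
  rcases (B ∪ T).eq_empty_or_nonempty with hB | hB
  · rw [jaccardDist_of_union_eq_empty hB]
    linarith [jaccardDist_le_one (A ∪ B) T, jaccardDist_nonneg A T]
  have hAB : (A ∪ B ∪ T).Nonempty := hA.mono (by grind)
  have hcard : (#((A ∪ B) ∆ T) : ℝ) ≤ #(A ∆ T) + #(B ∆ T) := by
    exact_mod_cast (card_le_card (union_symmDiff_subset A B T)).trans (card_union_le _ _)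
  have hdenom {X : Finset α} (hX : X ⊆ A ∪ B) (hXT : (X ∪ T).Nonempty) :
      (#(X ∆ T) : ℝ) / #(A ∪ B ∪ T) ≤ #(X ∆ T) / #(X ∪ T) :=
    div_le_div_of_nonneg_left (by positivity) (by exact_mod_cast hXT.card_pos)
      (by exact_mod_cast card_le_card (union_subset_union_left hX))
  rw [jaccardDist_eq_card_symmDiff_div hA, jaccardDist_eq_card_symmDiff_div hB,
    jaccardDist_eq_card_symmDiff_div hAB]
  calc (#((A ∪ B) ∆ T) : ℝ) / #(A ∪ B ∪ T)
      ≤ #(A ∆ T) / #(A ∪ B ∪ T) + #(B ∆ T) / #(A ∪ B ∪ T) := by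
        rw [← add_div]
        gcongr
    _ ≤ #(A ∆ T) / #(A ∪ T) + #(B ∆ T) / #(B ∪ T) :=
        add_le_add (hdenom subset_union_left hA) (hdenom subset_union_right hB)

end Finset

theorem jaccard_subadditivity_general {α : Type*} [DecidableEq α] (A B T : Finset α) :
    1 - ((((A ∪ B) ∩ T).card : ℝ) / (((A ∪ B) ∪ T).card : ℝ)) ≤
      2 * ((1 - ((A ∩ T).card : ℝ) / ((A ∪ T).card : ℝ)) +
           (1 - ((B ∩ T).card : ℝ) / ((B ∪ T).card : ℝ))) := by
  have hsum := jaccardDist_union_le A B T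
  have hnonneg := add_nonneg (jaccardDist_nonneg A T) (jaccardDist_nonneg B T)
  unfold jaccardDist at hsum hnonneg
  linarith

theorem jaccard_subadditivity {α : Type*} [DecidableEq α] (A B T : Finset α)
    (hA : (A ∪ T).Nonempty) (hB : (B ∪ T).Nonempty) (hAB : ((A ∪ B) ∪ T).Nonempty) :
    1 - ((((A ∪ B) ∩ T).card : ℝ) / (((A ∪ B) ∪ T).card : ℝ)) ≤
      2 * ((1 - ((A ∩ T).card : ℝ) / ((A ∪ T).card : ℝ)) +
           (1 - ((B ∩ T).card : ℝ) / ((B ∪ T).card : ℝ))) :=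
  jaccard_subadditivity_general A B T
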